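/- arXiv:2307.12772 — 2 statements merged into one kernel-verified Lean document; each statement's English description precedes it below -/
import Mathlib

section
/- m(ω) tends to 1/2 as ω tends to 0 from the right, i.e. the limit of m along ω → 0 within (0, π) equals 1/2. (Proposition 5.3, limit part.) -/
/-- `M θ x = cosh((π − θ)x) / (2(1 + cosh(πx)))`. -/
noncomputable def M (θ x : ℝ) : ℝ :=
  Real.cosh ((Real.pi - θ) * x) / (2 * (1 + Real.cosh (Real.pi * x)))

/-- `m θ = sup_{x ∈ ℝ} M θ x`. -/
noncomputable def m (θ : ℝ) : ℝ := ⨆ x : ℝ, M θ x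

/-! On `[0, 2π]` we have `cosh((π − θ)x) ≤ cosh(πx)`, so `m ≤ 1/2` there. Conversely `m` is a
supremum of functions continuous in `θ`, hence lower semicontinuous where it is bounded, so
`liminf m ≥ m 0`, and `m 0 = 1/2` because `M 0 x = 1/2 − 1/(2(1 + cosh(πx))) → 1/2`. -/

open Filter Topology Set Real

lemma Real.tendsto_cosh_atTop : Tendsto cosh atTop atTop := by
  refine tendsto_atTop_mono (fun x => ?_) (tendsto_exp_atTop.atTop_div_const two_pos)
  rw [cosh_eq]
  gcongr
  exact le_add_of_nonneg_right (exp_pos _).le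

lemma Ioo_zero_pi_subset_Icc_zero_two_pi : Ioo 0 π ⊆ Icc 0 (2 * π) :=
  Ioo_subset_Icc_self.trans (Icc_subset_Icc_right (by linarith [pi_pos]))

lemma two_mul_one_add_cosh_pos (x : ℝ) : 0 < 2 * (1 + cosh x) := by
  have := cosh_pos x
  positivity

lemma M_le_half {θ : ℝ} (hθ : θ ∈ Icc 0 (2 * π)) (x : ℝ) : M θ x ≤ 1 / 2 := by
  have hcosh : cosh ((π - θ) * x) ≤ cosh (π * x) := by
    rw [cosh_le_cosh, abs_mul, abs_mul, abs_of_pos pi_pos]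
    gcongr
    exact abs_le.2 ⟨by linarith [hθ.2], by linarith [hθ.1]⟩
  rw [M, div_le_iff₀ (two_mul_one_add_cosh_pos _)]
  linarith

lemma bddAbove_range_M {θ : ℝ} (hθ : θ ∈ Icc 0 (2 * π)) : BddAbove (range (M θ)) :=
  ⟨1 / 2, forall_mem_range.2 (M_le_half hθ)⟩

lemma m_le_half {θ : ℝ} (hθ : θ ∈ Icc 0 (2 * π)) : m θ ≤ 1 / 2 :=
  ciSup_le (M_le_half hθ)

lemma continuous_M_left (x : ℝ) : Continuous fun θ => M θ x := by
  unfold M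
  fun_prop

lemma M_zero_eq (x : ℝ) : M 0 x = 1 / 2 - (2 * (1 + cosh (π * x)))⁻¹ := by
  have := two_mul_one_add_cosh_pos (π * x)
  rw [M, sub_zero]
  field_simp
  ring

lemma tendsto_M_zero_atTop : Tendsto (M 0) atTop (𝓝 (1 / 2)) := by
  have hcosh : Tendsto (fun x => cosh (π * x)) atTop atTop :=
    tendsto_cosh_atTop.comp (tendsto_id.const_mul_atTop pi_pos)
  have hinv : Tendsto (fun x => (2 * (1 + cosh (π * x)))⁻¹) atTop (𝓝 0) :=
    tendsto_inv_atTop_zero.comp ((tendsto_atTop_add_const_left _ 1 hcosh).const_mul_atTop two_pos)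
  have h := hinv.const_sub (1 / 2 : ℝ)
  rw [sub_zero] at h
  exact h.congr fun x => (M_zero_eq x).symm

lemma m_zero : m 0 = 1 / 2 :=
  ciSup_eq_of_forall_le_of_forall_lt_exists_gt (M_le_half ⟨le_rfl, by positivity⟩)
    fun _ hw => (tendsto_M_zero_atTop.eventually (lt_mem_nhds hw)).exists

lemma lowerSemicontinuousWithinAt_m_zero : LowerSemicontinuousWithinAt m (Ioo 0 π) 0 :=
  lowerSemicontinuousWithinAt_ciSup
    (eventually_nhdsWithin_of_forall fun _ hθ =>
      bddAbove_range_M (Ioo_zero_pi_subset_Icc_zero_two_pi hθ))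
    fun x => (continuous_M_left x).lowerSemicontinuous.lowerSemicontinuousWithinAt _ _

theorem stmt_3 :
    Filter.Tendsto m (nhdsWithin 0 (Set.Ioo 0 Real.pi)) (nhds (1 / 2)) := by
  refine tendsto_order.2 ⟨fun b hb => ?_, fun b hb => ?_⟩
  · exact lowerSemicontinuousWithinAt_m_zero b (by rwa [m_zero] : b < m 0)
  · filter_upwards [self_mem_nhdsWithin] with θ hθ
    exact (m_le_half (Ioo_zero_pi_subset_Icc_zero_two_pi hθ)).trans_lt hb
end

section
/- m(ω) = 1/4 for every ω ∈ [π/2, π). (Proposition 5.3, last part.) -/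
/-! With `c = cosh (π x / 2) ≥ 1`, the denominator of `M θ x` is `4 c²` while, for
`|π - θ| ≤ π / 2`, the numerator is at most `c`; so `M θ x ≤ 1 / (4 c) ≤ 1 / 4`,
with equality at `x = 0`. -/

open Real

lemma M_zero_right (θ : ℝ) : M θ 0 = 1 / 4 := by
  norm_num [M]

lemma M_le_quarter {θ : ℝ} (hθ : |π - θ| ≤ π / 2) (x : ℝ) : M θ x ≤ 1 / 4 := by
  set c := cosh (π / 2 * x)
  have hc : 1 ≤ c := one_le_cosh _
  have hnum : cosh ((π - θ) * x) ≤ c := by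
    rw [cosh_le_cosh, abs_mul, abs_mul, abs_of_pos (by positivity : 0 < π / 2)]
    gcongr
  have hden : 2 * (1 + cosh (π * x)) = 4 * c ^ 2 := by
    rw [show π * x = 2 * (π / 2 * x) by ring, cosh_two_mul, cosh_sq']
    ring
  rw [M, hden, div_le_iff₀ (by positivity)]
  nlinarith

lemma m_eq_quarter {θ : ℝ} (hθ : |π - θ| ≤ π / 2) : m θ = 1 / 4 := by
  have hbdd : BddAbove (Set.range (M θ)) := ⟨1 / 4, Set.forall_mem_range.2 (M_le_quarter hθ)⟩
  refine le_antisymm (ciSup_le (M_le_quarter hθ)) ?_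
  rw [← M_zero_right θ]
  exact le_ciSup hbdd 0

theorem stmt_4 (ω : ℝ) (hω : ω ∈ Set.Ico (Real.pi / 2) Real.pi) :
    m ω = 1 / 4 := by
  refine m_eq_quarter (abs_le.2 ⟨?_, ?_⟩) <;> linarith [hω.1, hω.2]
end
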